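/- arXiv:2302.02774 — 3 statements merged into one kernel-verified Lean document; each statement's English description precedes it below -/
import Mathlib

section
/- Let (𝒳,𝒜) be a measurable space, μ_X a probability measure on 𝒳 (the law of inputs), and κ a Markov kernel from 𝒳 to 𝒳 (the conditional law of an augmentation ξ given the input x); let μ_Ξ = ∫ κ(x) dμ_X(x) be the marginal law of augmentations. Then for every k ≥ 1, every β ∈ ℝ, and every measurable ψ : 𝒳 → ℝ^k with ∫‖ψ‖⁴ dμ_Ξ < ∞, the identity β·∫_𝒳∫_𝒳∫_𝒳 ‖ψ(ξ)−ψ(ξ′)‖² κ(x)(dξ) κ(x)(dξ′) dμ_X(x) + ‖∫_𝒳 ψ(ξ)ψ(ξ)ᵀ dμ_Ξ(ξ) − I_k‖_F² = 2(β−1)·∫_𝒳 ‖ψ(ξ)‖² dμ_Ξ(ξ) − 2β·∫_𝒳∫_𝒳∫_𝒳 ⟨ψ(ξ),ψ(ξ′)⟩ κ(x)(dξ)κ(x)(dξ′) dμ_X(x) + ∫_𝒳∫_𝒳 ⟨ψ(ξ),ψ(ξ′)⟩² dμ_Ξ(ξ) dμ_Ξ(ξ′) + k holds, where ‖·‖_F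 is the Frobenius norm on k×k real matrices and I_k the identity matrix. In particular, for β = 1 the VICReg-type loss on the left equals the spectral contrastive loss on the right. -/
open MeasureTheory ProbabilityTheory

lemma vicreg_aux_bind {𝒳 : Type*} [MeasurableSpace 𝒳]
    (μX : Measure 𝒳) [IsProbabilityMeasure μX]
    (κ : Kernel 𝒳 𝒳) [IsMarkovKernel κ]
    (g : 𝒳 → ℝ) (hg : Measurable g)
    (hgi : Integrable g (μX.bind fun x => κ x)) :
    (∀ᵐ x ∂μX, Integrable g (κ x)) ∧ Integrable (fun x => ∫ ξ, g ξ ∂κ x) μX ∧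
      (∫ x, ∫ ξ, g ξ ∂κ x ∂μX = ∫ ξ, g ξ ∂(μX.bind fun x => κ x)) := by
  have hmap : μX.bind (fun x => κ x) = (μX ⊗ₘ κ).map Prod.snd := by
    ext s hs
    rw [Measure.map_apply measurable_snd hs,
      Measure.bind_apply hs (Kernel.measurable κ).aemeasurable,
      Measure.compProd_apply (measurable_snd hs)]
    rfl
  have hg2 : Integrable (fun p : 𝒳 × 𝒳 => g p.2) (μX ⊗ₘ κ) := by
    rw [hmap] at hgi
    exact (integrable_map_measure hg.aestronglyMeasurable
      measurable_snd.aemeasurable).mp hgi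
  have h1 := (Measure.integrable_compProd_iff
    (hg.comp measurable_snd).aestronglyMeasurable).mp hg2
  refine ⟨h1.1, ?_, ?_⟩
  · refine h1.2.mono'
      (StronglyMeasurable.integral_kernel_prod_right'
        ((hg.comp measurable_snd).stronglyMeasurable)).aestronglyMeasurable
      (Filter.Eventually.of_forall fun x => ?_)
    exact norm_integral_le_integral_norm _
  · rw [hmap, integral_map measurable_snd.aemeasurable hg.aestronglyMeasurable,
      Measure.integral_compProd hg2]

lemma vicreg_core {𝒳 : Type*} [MeasurableSpace 𝒳] {k : ℕ}
    (ψ : 𝒳 → Fin k → ℝ) (hψ : Measurable ψ)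
    (ν : Measure 𝒳) [IsProbabilityMeasure ν]
    (hF : Integrable (fun ξ => ∑ i, ψ ξ i ^ 2) ν) :
    (∫ ξ, ∫ ξ', ∑ i, (ψ ξ i - ψ ξ' i) ^ 2 ∂ν ∂ν
        = 2 * (∫ ξ, ∑ i, ψ ξ i ^ 2 ∂ν) - 2 * ∑ i, (∫ ξ, ψ ξ i ∂ν) ^ 2)
    ∧ (∫ ξ, ∫ ξ', ∑ i, ψ ξ i * ψ ξ' i ∂ν ∂ν = ∑ i, (∫ ξ, ψ ξ i ∂ν) ^ 2)
    ∧ (∑ i, (∫ ξ, ψ ξ i ∂ν) ^ 2 ≤ ∫ ξ, ∑ i, ψ ξ i ^ 2 ∂ν) := by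
  set F : 𝒳 → ℝ := fun ξ => ∑ i, ψ ξ i ^ 2 with hFdef
  set CF : ℝ := ∫ ξ, F ξ ∂ν with hCFdef
  set m : Fin k → ℝ := fun i => ∫ ξ, ψ ξ i ∂ν with hmdef
  have hψi : ∀ i, Measurable fun ξ => ψ ξ i := fun i => (measurable_pi_apply i).comp hψ
  have hsq : ∀ ξ i, ψ ξ i ^ 2 ≤ F ξ := fun ξ i =>
    Finset.single_le_sum (fun j _ => sq_nonneg (ψ ξ j)) (Finset.mem_univ i)
  have hiInt : ∀ i, Integrable (fun ξ => ψ ξ i) ν := by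
    intro i
    refine ((integrable_const (1:ℝ)).add hF).mono' (hψi i).aestronglyMeasurable
      (Filter.Eventually.of_forall fun ξ => ?_)
    have h1 := hsq ξ i
    have h2 : |ψ ξ i| ≤ 1 + ψ ξ i ^ 2 := by nlinarith [sq_abs (ψ ξ i), abs_nonneg (ψ ξ i)]
    simpa [Real.norm_eq_abs] using h2.trans (by linarith)
  have hsqInt : ∀ i, Integrable (fun ξ => ψ ξ i ^ 2) ν := by
    intro i
    refine hF.mono' ((hψi i).pow_const 2).aestronglyMeasurable
      (Filter.Eventually.of_forall fun ξ => ?_)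
    have := hsq ξ i
    simpa [Real.norm_eq_abs, abs_of_nonneg (sq_nonneg (ψ ξ i))] using this
  have hlinInt : ∀ a : Fin k → ℝ, Integrable (fun ξ => ∑ i, a i * ψ ξ i) ν :=
    fun a => integrable_finset_sum _ fun i _ => (hiInt i).const_mul _
  have hinner2 : ∀ a : Fin k → ℝ, ∫ ξ', ∑ i, a i * ψ ξ' i ∂ν = ∑ i, a i * m i := by
    intro a
    rw [integral_finset_sum _ fun i _ => (hiInt i).const_mul _]
    exact Finset.sum_congr rfl fun i _ => integral_const_mul _ _
  have houter : ∫ ξ, ∑ i, ψ ξ i * m i ∂ν = ∑ i, m i ^ 2 := by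
    rw [integral_finset_sum _ fun i _ => (hiInt i).mul_const _]
    exact Finset.sum_congr rfl fun i _ => by rw [integral_mul_const]; ring
  have h2 : ∫ ξ, ∫ ξ', ∑ i, ψ ξ i * ψ ξ' i ∂ν ∂ν = ∑ i, m i ^ 2 := by
    have h : ∀ ξ, ∫ ξ', ∑ i, ψ ξ i * ψ ξ' i ∂ν = ∑ i, ψ ξ i * m i := fun ξ => hinner2 (ψ ξ)
    simp_rw [h]
    exact houter
  refine ⟨?_, h2, ?_⟩
  · have hexp : ∀ a b : Fin k → ℝ, ∑ i, (a i - b i) ^ 2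
        = (∑ i, a i ^ 2) + (∑ i, b i ^ 2) - 2 * ∑ i, a i * b i := by
      intro a b
      rw [Finset.mul_sum, ← Finset.sum_add_distrib, ← Finset.sum_sub_distrib]
      exact Finset.sum_congr rfl fun i _ => by ring
    have hinner1 : ∀ ξ, ∫ ξ', ∑ i, (ψ ξ i - ψ ξ' i) ^ 2 ∂ν
        = F ξ + CF - 2 * ∑ i, ψ ξ i * m i := by
      intro ξ
      have : (fun ξ' => ∑ i, (ψ ξ i - ψ ξ' i) ^ 2)
          = fun ξ' => (F ξ + F ξ') - 2 * ∑ i, ψ ξ i * ψ ξ' i := by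
        funext ξ'; rw [hexp]
      have I1 : Integrable (fun ξ' => F ξ + F ξ') ν := by
        exact (integrable_const _).add hF
      have I2 : Integrable (fun ξ' => 2 * ∑ i, ψ ξ i * ψ ξ' i) ν := by
        exact (hlinInt (ψ ξ)).const_mul 2
      rw [this, integral_sub I1 I2, integral_add (integrable_const _) hF,
        integral_const_mul, hinner2 (ψ ξ), integral_const]
      simp [measure_univ, hCFdef]
    calc ∫ ξ, ∫ ξ', ∑ i, (ψ ξ i - ψ ξ' i) ^ 2 ∂ν ∂ν
        = ∫ ξ, (F ξ + CF - 2 * ∑ i, ψ ξ i * m i) ∂ν := by simp_rw [hinner1]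
      _ = 2 * CF - 2 * ∑ i, m i ^ 2 := by
          have I1 : Integrable (fun ξ => F ξ + CF) ν := by
            exact hF.add (integrable_const _)
          have I2 : Integrable (fun ξ => 2 * ∑ i, ψ ξ i * m i) ν := by
            exact (integrable_finset_sum _ fun i _ => (hiInt i).mul_const _).const_mul 2
          rw [integral_sub I1 I2, integral_add hF (integrable_const _),
            integral_const_mul, houter, integral_const]
          simp only [measure_univ, ENNReal.toReal_one, smul_eq_mul, one_mul, probReal_univ, hCFdef]
          ring
  · have hvar : ∀ i, m i ^ 2 ≤ ∫ ξ, ψ ξ i ^ 2 ∂ν := by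
      intro i
      have hnn : (0:ℝ) ≤ ∫ ξ, (ψ ξ i - m i) ^ 2 ∂ν := integral_nonneg fun ξ => sq_nonneg _
      have hexp : (fun ξ => (ψ ξ i - m i) ^ 2)
          = fun ξ => (ψ ξ i ^ 2 - 2 * m i * ψ ξ i) + m i ^ 2 := by
        funext ξ; ring
      have I1 : Integrable (fun ξ => ψ ξ i ^ 2 - 2 * m i * ψ ξ i) ν := by
        exact (hsqInt i).sub ((hiInt i).const_mul _)
      have I2 : Integrable (fun ξ => 2 * m i * ψ ξ i) ν := by
        exact (hiInt i).const_mul _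
      rw [hexp, integral_add I1 (integrable_const _), integral_sub (hsqInt i) I2,
        integral_const_mul, integral_const] at hnn
      simp only [measure_univ, ENNReal.toReal_one, smul_eq_mul, one_mul, probReal_univ] at hnn
      nlinarith [hnn]
    calc ∑ i, m i ^ 2 ≤ ∑ i, ∫ ξ, ψ ξ i ^ 2 ∂ν := Finset.sum_le_sum fun i _ => hvar i
      _ = ∫ ξ, ∑ i, ψ ξ i ^ 2 ∂ν := (integral_finset_sum _ fun i _ => hsqInt i).symm

lemma vicreg_gram {𝒳 : Type*} [MeasurableSpace 𝒳] {k : ℕ}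
    (ψ : 𝒳 → Fin k → ℝ) (hψ : Measurable ψ)
    (μ : Measure 𝒳) [IsProbabilityMeasure μ]
    (hF : Integrable (fun ξ => ∑ i, ψ ξ i ^ 2) μ)
    (hij : ∀ i j, Integrable (fun ξ => ψ ξ i * ψ ξ j) μ) :
    ∑ i, ∑ j, (∫ ξ, ψ ξ i * ψ ξ j ∂μ) ^ 2
      = ∫ ξ, ∫ ξ', (∑ i, ψ ξ i * ψ ξ' i) ^ 2 ∂μ ∂μ := by
  set M : Fin k → Fin k → ℝ := fun i j => ∫ ξ, ψ ξ i * ψ ξ j ∂μ with hMdef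
  have hexp : ∀ a b : Fin k → ℝ, (∑ i, a i * b i) ^ 2
      = ∑ i, ∑ j, (a i * a j) * (b i * b j) := by
    intro a b
    rw [sq, Finset.sum_mul_sum]
    exact Finset.sum_congr rfl fun i _ => Finset.sum_congr rfl fun j _ => by ring
  have hinner : ∀ ξ, ∫ ξ', (∑ i, ψ ξ i * ψ ξ' i) ^ 2 ∂μ
      = ∑ i, ∑ j, (ψ ξ i * ψ ξ j) * M i j := by
    intro ξ
    have h1 : (fun ξ' => (∑ i, ψ ξ i * ψ ξ' i) ^ 2)
        = fun ξ' => ∑ i, ∑ j, (ψ ξ i * ψ ξ j) * (ψ ξ' i * ψ ξ' j) := by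
      funext ξ'; rw [hexp]
    rw [h1, integral_finset_sum _ fun i _ =>
      integrable_finset_sum _ fun j _ => (hij i j).const_mul _]
    refine Finset.sum_congr rfl fun i _ => ?_
    rw [integral_finset_sum _ fun j _ => (hij i j).const_mul _]
    exact Finset.sum_congr rfl fun j _ => integral_const_mul _ _
  simp_rw [hinner]
  rw [integral_finset_sum _ fun i _ =>
    integrable_finset_sum _ fun j _ => (hij i j).mul_const _]
  refine Finset.sum_congr rfl fun i _ => ?_
  rw [integral_finset_sum _ fun j _ => (hij i j).mul_const _]
  exact Finset.sum_congr rfl fun j _ => by rw [integral_mul_const]; ring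

/-- **The VICReg-type loss equals the spectral-contrastive-type expansion.**
For a probability measure `μX` on inputs, a Markov kernel `κ` giving the law of an
augmentation given the input, and `μΞ` the marginal law of augmentations, for any
`k ≥ 1`, `β : ℝ` and any measurable `ψ : 𝒳 → ℝ^k` with `∫ ‖ψ‖⁴ dμΞ < ∞`, the identity
`β · E_X E_{ξ,ξ'}[‖ψ(ξ)−ψ(ξ')‖² | X] + ‖E_ξ[ψ(ξ)ψ(ξ)ᵀ] − I‖_F²
 = 2(β−1)·E_ξ‖ψ(ξ)‖² − 2β·E_X E_{ξ,ξ'}[⟨ψ(ξ),ψ(ξ')⟩ | X] + E_{ξ,ξ'}⟨ψ(ξ),ψ(ξ')⟩² + k`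
holds. -/
theorem vicreg_loss_eq_spectral_contrastive
    {𝒳 : Type*} [MeasurableSpace 𝒳]
    (μX : Measure 𝒳) [IsProbabilityMeasure μX]
    (κ : Kernel 𝒳 𝒳) [IsMarkovKernel κ]
    (μΞ : Measure 𝒳) (hμΞ : μΞ = μX.bind (fun x => κ x))
    (k : ℕ) (hk : 1 ≤ k) (β : ℝ)
    (ψ : 𝒳 → Fin k → ℝ) (hψ : Measurable ψ)
    (hint : Integrable (fun ξ => (∑ i, ψ ξ i ^ 2) ^ 2) μΞ) :
    β * (∫ x, ∫ ξ, ∫ ξ', ∑ i, (ψ ξ i - ψ ξ' i) ^ 2 ∂(κ x) ∂(κ x) ∂μX)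
      + ∑ i, ∑ j, ((∫ ξ, ψ ξ i * ψ ξ j ∂μΞ) - (if i = j then (1 : ℝ) else 0)) ^ 2
    = 2 * (β - 1) * (∫ ξ, ∑ i, ψ ξ i ^ 2 ∂μΞ)
      - 2 * β * (∫ x, ∫ ξ, ∫ ξ', ∑ i, ψ ξ i * ψ ξ' i ∂(κ x) ∂(κ x) ∂μX)
      + (∫ ξ, ∫ ξ', (∑ i, ψ ξ i * ψ ξ' i) ^ 2 ∂μΞ ∂μΞ) + k := by
  have hprobΞ : IsProbabilityMeasure μΞ := by
    rw [hμΞ]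
    constructor
    rw [Measure.bind_apply MeasurableSet.univ (Kernel.measurable κ).aemeasurable]
    simp
  have hψi : ∀ i, Measurable fun ξ => ψ ξ i := fun i => (measurable_pi_apply i).comp hψ
  have hFmeas : Measurable fun ξ => ∑ i, ψ ξ i ^ 2 :=
    Finset.measurable_sum _ fun i _ => (hψi i).pow_const 2
  have hsqle : ∀ ξ (i : Fin k), ψ ξ i ^ 2 ≤ ∑ i, ψ ξ i ^ 2 := fun ξ i =>
    Finset.single_le_sum (fun j _ => sq_nonneg (ψ ξ j)) (Finset.mem_univ i)
  have hF : Integrable (fun ξ => ∑ i, ψ ξ i ^ 2) μΞ := by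
    refine ((integrable_const (1:ℝ)).add hint).mono' hFmeas.aestronglyMeasurable
      (Filter.Eventually.of_forall fun ξ => ?_)
    have h0 : (0:ℝ) ≤ ∑ i, ψ ξ i ^ 2 := Finset.sum_nonneg fun i _ => sq_nonneg _
    have : ∑ i, ψ ξ i ^ 2 ≤ 1 + (∑ i, ψ ξ i ^ 2) ^ 2 := by nlinarith
    simpa [Real.norm_eq_abs, abs_of_nonneg h0] using this
  have hij : ∀ i j, Integrable (fun ξ => ψ ξ i * ψ ξ j) μΞ := by
    intro i j
    refine hF.mono' ((hψi i).mul (hψi j)).aestronglyMeasurable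
      (Filter.Eventually.of_forall fun ξ => ?_)
    have h1 := hsqle ξ i; have h2 := hsqle ξ j
    rw [Real.norm_eq_abs, abs_mul]
    nlinarith [sq_abs (ψ ξ i), sq_abs (ψ ξ j), abs_nonneg (ψ ξ i), abs_nonneg (ψ ξ j),
      sq_nonneg (|ψ ξ i| - |ψ ξ j|)]
  have hsqInt : ∀ i, Integrable (fun ξ => ψ ξ i ^ 2) μΞ := by
    intro i
    have := hij i i
    simpa [sq] using this
  -- bind facts for F
  have hbind := vicreg_aux_bind μX κ _ hFmeas (hμΞ ▸ hF)
  obtain ⟨hae, hCint, hCeq⟩ := hbind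
  rw [← hμΞ] at hCeq
  -- a.e. core identities
  have hcore : ∀ᵐ x ∂μX,
      (∫ ξ, ∫ ξ', ∑ i, (ψ ξ i - ψ ξ' i) ^ 2 ∂(κ x) ∂(κ x)
        = 2 * (∫ ξ, ∑ i, ψ ξ i ^ 2 ∂(κ x)) - 2 * ∑ i, (∫ ξ, ψ ξ i ∂(κ x)) ^ 2)
      ∧ (∫ ξ, ∫ ξ', ∑ i, ψ ξ i * ψ ξ' i ∂(κ x) ∂(κ x) = ∑ i, (∫ ξ, ψ ξ i ∂(κ x)) ^ 2)
      ∧ (∑ i, (∫ ξ, ψ ξ i ∂(κ x)) ^ 2 ≤ ∫ ξ, ∑ i, ψ ξ i ^ 2 ∂(κ x)) := by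
    filter_upwards [hae] with x hx
    exact vicreg_core ψ hψ (κ x) hx
  -- integrability of G
  have hmmeas : ∀ i, StronglyMeasurable fun x => ∫ ξ, ψ ξ i ∂(κ x) := by
    intro i
    exact StronglyMeasurable.integral_kernel_prod_right'
      (((hψi i).comp measurable_snd).stronglyMeasurable)
  have hGmeas : Measurable fun x => ∑ i, (∫ ξ, ψ ξ i ∂(κ x)) ^ 2 :=
    Finset.measurable_sum _ fun i _ => ((hmmeas i).measurable).pow_const 2
  have hGint : Integrable (fun x => ∑ i, (∫ ξ, ψ ξ i ∂(κ x)) ^ 2) μX := by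
    refine hCint.mono' hGmeas.aestronglyMeasurable ?_
    filter_upwards [hcore] with x hx
    have h0 : (0:ℝ) ≤ ∑ i, (∫ ξ, ψ ξ i ∂(κ x)) ^ 2 := Finset.sum_nonneg fun i _ => sq_nonneg _
    rw [Real.norm_eq_abs, abs_of_nonneg h0]
    exact hx.2.2
  -- first main term
  have hDeq : (∫ x, ∫ ξ, ∫ ξ', ∑ i, (ψ ξ i - ψ ξ' i) ^ 2 ∂(κ x) ∂(κ x) ∂μX)
      = 2 * (∫ ξ, ∑ i, ψ ξ i ^ 2 ∂μΞ)
        - 2 * ∫ x, ∑ i, (∫ ξ, ψ ξ i ∂(κ x)) ^ 2 ∂μX := by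
    rw [integral_congr_ae (hcore.mono fun x hx => hx.1)]
    have I1 : Integrable (fun x => 2 * ∫ ξ, ∑ i, ψ ξ i ^ 2 ∂(κ x)) μX := by
      exact hCint.const_mul 2
    have I2 : Integrable (fun x => 2 * ∑ i, (∫ ξ, ψ ξ i ∂(κ x)) ^ 2) μX := by
      exact hGint.const_mul 2
    rw [integral_sub I1 I2, integral_const_mul, integral_const_mul, hCeq]
  have hIeq : (∫ x, ∫ ξ, ∫ ξ', ∑ i, ψ ξ i * ψ ξ' i ∂(κ x) ∂(κ x) ∂μX)
      = ∫ x, ∑ i, (∫ ξ, ψ ξ i ∂(κ x)) ^ 2 ∂μX :=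
    integral_congr_ae (hcore.mono fun x hx => hx.2.1)
  -- matrix term
  have htrace : ∑ i, (∫ ξ, ψ ξ i * ψ ξ i ∂μΞ) = ∫ ξ, ∑ i, ψ ξ i ^ 2 ∂μΞ := by
    rw [← integral_finset_sum _ fun i _ => hij i i]
    congr 1; funext ξ
    exact Finset.sum_congr rfl fun i _ => (sq (ψ ξ i)).symm
  have hgram := vicreg_gram ψ hψ μΞ hF hij
  have hT2 : ∑ i, ∑ j, ((∫ ξ, ψ ξ i * ψ ξ j ∂μΞ) - (if i = j then (1 : ℝ) else 0)) ^ 2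
      = (∫ ξ, ∫ ξ', (∑ i, ψ ξ i * ψ ξ' i) ^ 2 ∂μΞ ∂μΞ)
        - 2 * (∫ ξ, ∑ i, ψ ξ i ^ 2 ∂μΞ) + k := by
    have hrow : ∀ i : Fin k, ∑ j, ((∫ ξ, ψ ξ i * ψ ξ j ∂μΞ) - (if i = j then (1 : ℝ) else 0)) ^ 2
        = (∑ j, (∫ ξ, ψ ξ i * ψ ξ j ∂μΞ) ^ 2) - 2 * (∫ ξ, ψ ξ i * ψ ξ i ∂μΞ) + 1 := by
      intro i
      have hterm : ∀ j, ((∫ ξ, ψ ξ i * ψ ξ j ∂μΞ) - (if i = j then (1 : ℝ) else 0)) ^ 2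
          = (∫ ξ, ψ ξ i * ψ ξ j ∂μΞ) ^ 2
            - 2 * (if i = j then (∫ ξ, ψ ξ i * ψ ξ j ∂μΞ) else 0)
            + (if i = j then (1:ℝ) else 0) := by
        intro j
        by_cases h : i = j <;> simp [h] <;> ring
      simp_rw [hterm]
      rw [Finset.sum_add_distrib, Finset.sum_sub_distrib, ← Finset.mul_sum]
      simp [Finset.sum_ite_eq]
    simp_rw [hrow]
    rw [Finset.sum_add_distrib, Finset.sum_sub_distrib, ← Finset.mul_sum, htrace, hgram]
    simp [Finset.card_univ]
  rw [hDeq, hIeq, hT2]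
  ring
end

section
/- Let d ≥ 1, 𝒳 = {−1,+1}^{ℤ/dℤ} with the uniform probability measure, translations (a·x)_i = x_{i−a}, and for S ⊆ ℤ/dℤ and 0 ≤ m < k_S (with k_S the translation-orbit size of S, a divisor of d) let ψ_{m,S}(x) = k_S^{−1/2} ∑_{k=0}^{k_S−1} e^{2πi k m / k_S} χ_{S+k}(x) be the cyclic parities, where χ_S(x) = ∏_{i∈S} x_i. Let p be a probability distribution on ℤ/dℤ with discrete Fourier transform p̂(ω) = ∑_{a∈ℤ/dℤ} p(a) e^{−2πi a ω / d}, and consider the translation augmentation ξ = a·X with a ∼ p independent of X. Then for X uniform, a, a′ i.i.d. from p independent of X, and any two cyclic parities ψ_{m,S} and ψ_{m′,S′} (with S, S′ orbit representatives): E[ψ_{m,S}(a·X) · conj(ψ_{m′,S′}(a′·X))] = |p̂(m·d/k_S)|² if (m,S) = (m′,S′) and 0 otherwise. That is, the augmentation operator T of random translations is diagonal in the cyclic-parity basis with eigenvalue |p̂(m d / k_S)|² on ψ_{m,S}. -/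
open scoped Real

def parity {I : Type*} (S : Finset I) (x : I → Bool) : ℝ :=
  ∏ i ∈ S, (if x i then (1 : ℝ) else -1)

lemma parity_mul {I : Type*} [DecidableEq I] (T T' : Finset I) (x : I → Bool) :
    parity T x * parity T' x = parity (symmDiff T T') x := by
  unfold parity
  have h1 : (∏ i ∈ T ∪ T', (if x i then (1:ℝ) else -1)) * ∏ i ∈ T ∩ T', (if x i then (1:ℝ) else -1)
      = (∏ i ∈ T, (if x i then (1:ℝ) else -1)) * ∏ i ∈ T', (if x i then (1:ℝ) else -1) :=
    Finset.prod_union_inter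
  rw [← h1]
  have h2 : T ∪ T' = symmDiff T T' ∪ (T ∩ T') := by
    have := symmDiff_sup_inf (a := T) (b := T')
    simpa [Finset.sup_eq_union, Finset.inf_eq_inter] using this.symm
  have hdisj : Disjoint (symmDiff T T') (T ∩ T') := by
    simpa [Finset.inf_eq_inter] using disjoint_symmDiff_inf T T'
  rw [h2, Finset.prod_union hdisj]
  have h3 : (∏ i ∈ T ∩ T', (if x i then (1:ℝ) else -1)) * ∏ i ∈ T ∩ T', (if x i then (1:ℝ) else -1) = 1 := by
    rw [← Finset.prod_mul_distrib]
    refine Finset.prod_eq_one fun i _ => ?_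
    by_cases h : x i <;> simp [h]
  calc (∏ i ∈ symmDiff T T', (if x i then (1:ℝ) else -1)) * (∏ i ∈ T ∩ T', _) * ∏ i ∈ T ∩ T', _
      = (∏ i ∈ symmDiff T T', (if x i then (1:ℝ) else -1)) * ((∏ i ∈ T ∩ T', (if x i then (1:ℝ) else -1)) * ∏ i ∈ T ∩ T', (if x i then (1:ℝ) else -1)) := by ring
    _ = _ := by rw [h3, mul_one]

lemma sum_parity {I : Type*} [Fintype I] [DecidableEq I] (U : Finset I) :
    ∑ x : I → Bool, parity U x = if U = ∅ then (2:ℝ) ^ (Fintype.card I) else 0 := by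
  have key : ∀ x : I → Bool,
      parity U x = ∏ i : I, (if i ∈ U then (if x i then (1:ℝ) else -1) else 1) := by
    intro x
    rw [Finset.prod_ite_mem, Finset.univ_inter]
    rfl
  simp_rw [key]
  have := (Finset.prod_univ_sum (fun _ : I => (Finset.univ : Finset Bool))
    (fun i b => if i ∈ U then (if b then (1:ℝ) else -1) else 1)).symm
  rw [Fintype.piFinset_univ] at this
  rw [this]
  by_cases hU : U = ∅
  · simp [hU]
  · rw [if_neg hU]
    obtain ⟨i, hi⟩ := Finset.nonempty_iff_ne_empty.2 hU
    refine Finset.prod_eq_zero (Finset.mem_univ i) ?_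
    simp [hi]

lemma sum_parity_mul {I : Type*} [Fintype I] [DecidableEq I] (T T' : Finset I) :
    ∑ x : I → Bool, parity T x * parity T' x = if T = T' then (2:ℝ) ^ (Fintype.card I) else 0 := by
  simp_rw [parity_mul]
  rw [sum_parity]
  congr 1
  simp [symmDiff_eq_bot]
def orbitSize (d : ℕ) [NeZero d] (S : Finset (ZMod d)) : ℕ :=
  (Finset.image (fun a : ZMod d => S.image (· + a)) Finset.univ).card

noncomputable def cyclicParity (d : ℕ) [NeZero d] (S : Finset (ZMod d)) (m : ℕ)
    (x : ZMod d → Bool) : ℂ :=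
  (Real.sqrt (orbitSize d S) : ℂ)⁻¹ *
    ∑ k ∈ Finset.range (orbitSize d S),
      Complex.exp (2 * π * Complex.I * k * m / (orbitSize d S)) *
        (parity (S.image (· + (k : ZMod d))) x : ℂ)

noncomputable def dft (d : ℕ) [NeZero d] (p : ZMod d → ℝ) (ω : ZMod d) : ℂ :=
  ∑ a : ZMod d, (p a : ℂ) *
    Complex.exp (-(2 * π * Complex.I * (ZMod.val a) * (ZMod.val ω)) / d)

section Period
variable (d : ℕ) [NeZero d] (S : Finset (ZMod d))

lemma image_add_add (a b : ZMod d) :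
    (S.image (· + a)).image (· + b) = S.image (· + (a + b)) := by
  rw [Finset.image_image]; congr 1; funext s; simp [add_assoc]

def period : ℕ :=
  Nat.find (p := fun t => 0 < t ∧ S.image (· + (t : ZMod d)) = S)
    ⟨d, NeZero.pos d, by simp [ZMod.natCast_self]⟩

lemma period_pos : 0 < period d S := (Nat.find_spec (p := fun t => 0 < t ∧ S.image (· + (t : ZMod d)) = S) _).1

lemma period_spec : S.image (· + ((period d S : ℕ) : ZMod d)) = S :=
  (Nat.find_spec (p := fun t => 0 < t ∧ S.image (· + (t : ZMod d)) = S) _).2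

lemma period_min {t : ℕ} (h0 : 0 < t) (h : t < period d S) :
    S.image (· + (t : ZMod d)) ≠ S := fun hc =>
  Nat.find_min (p := fun t => 0 < t ∧ S.image (· + (t : ZMod d)) = S) _ h ⟨h0, hc⟩

lemma stab_mul (q : ℕ) : S.image (· + ((period d S * q : ℕ) : ZMod d)) = S := by
  induction q with
  | zero => simp
  | succ n ih =>
      have h : ((period d S * (n+1) : ℕ) : ZMod d)
          = ((period d S * n : ℕ) : ZMod d) + ((period d S : ℕ) : ZMod d) := by push_cast; ring
      rw [h, ← image_add_add, ih, period_spec]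

lemma image_natCast_mod (t : ℕ) :
    S.image (· + (t : ZMod d)) = S.image (· + ((t % period d S : ℕ) : ZMod d)) := by
  conv_lhs => rw [← Nat.div_add_mod t (period d S)]
  have h : ((period d S * (t / period d S) + t % period d S : ℕ) : ZMod d)
      = ((period d S * (t / period d S) : ℕ) : ZMod d) + ((t % period d S : ℕ) : ZMod d) := by
    push_cast; ring
  rw [h, ← image_add_add, stab_mul]

lemma stab_nat (t : ℕ) : S.image (· + (t : ZMod d)) = S ↔ period d S ∣ t := by
  constructor
  · intro h
    rw [image_natCast_mod] at h
    rcases Nat.eq_zero_or_pos (t % period d S) with h0 | h0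
    · exact Nat.dvd_of_mod_eq_zero h0
    · exact absurd h (period_min d S h0 (Nat.mod_lt _ (period_pos d S)))
  · rintro ⟨q, rfl⟩; exact stab_mul d S q

lemma period_dvd : period d S ∣ d :=
  (stab_nat d S d).1 (by simp [ZMod.natCast_self])

lemma stab_zmod (c : ZMod d) : S.image (· + c) = S ↔ period d S ∣ c.val := by
  rw [← stab_nat]
  rw [ZMod.natCast_val, ZMod.cast_id]

lemma orbitSize_eq : orbitSize d S = period d S := by
  unfold orbitSize
  have him : Finset.image (fun a : ZMod d => S.image (· + a)) Finset.univ
      = (Finset.range (period d S)).image (fun t : ℕ => S.image (· + (t : ZMod d))) := by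
    ext T
    simp only [Finset.mem_image, Finset.mem_univ, Finset.mem_range, true_and]
    constructor
    · rintro ⟨a, rfl⟩
      refine ⟨a.val % period d S, Nat.mod_lt _ (period_pos d S), ?_⟩
      rw [← image_natCast_mod, ZMod.natCast_val, ZMod.cast_id]
    · rintro ⟨t, -, rfl⟩; exact ⟨(t : ZMod d), rfl⟩
  rw [him, Finset.card_image_of_injOn, Finset.card_range]
  have key : ∀ i j : ℕ, i ≤ j → j < period d S →
      S.image (· + (i : ZMod d)) = S.image (· + (j : ZMod d)) → i = j := by
    intro i j hij hj h
    have h2 : (S.image (· + (i : ZMod d))).image (· + (-(i : ZMod d)))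
        = (S.image (· + (j : ZMod d))).image (· + (-(i : ZMod d))) := by rw [h]
    rw [image_add_add, image_add_add, add_neg_cancel] at h2
    simp only [add_zero, Finset.image_id'] at h2
    have h3 : (j : ZMod d) + -(i : ZMod d) = ((j - i : ℕ) : ZMod d) := by
      rw [Nat.cast_sub hij]; ring
    rw [h3] at h2
    have h4 : period d S ∣ (j - i) := (stab_nat d S _).1 h2.symm
    have h5 : j - i = 0 := Nat.eq_zero_of_dvd_of_lt h4 (lt_of_le_of_lt (Nat.sub_le _ _) hj)
    omega
  intro i hi j hj hij
  simp only [Finset.coe_range, Set.mem_Iio] at hi hj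
  rcases le_total i j with h | h
  · exact key i j h hj hij
  · exact (key j i h hi hij.symm).symm
open Complex

noncomputable def E (k m n : ℕ) : ℂ := Complex.exp (2 * π * Complex.I * n * m / k)

lemma conj_E (k m n : ℕ) :
    (starRingEnd ℂ) (E k m n) = Complex.exp (-(2 * π * Complex.I * n * m / k)) := by
  rw [E, ← Complex.exp_conj]
  congr 1
  simp [map_div₀, map_mul, Complex.conj_I, Complex.conj_ofReal, map_ofNat]
  ring

lemma E_ne_zero (k m n : ℕ) : E k m n ≠ 0 := Complex.exp_ne_zero _

lemma conj_E' (k m n : ℕ) : (starRingEnd ℂ) (E k m n) = (E k m n)⁻¹ := by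
  rw [conj_E, E, ← Complex.exp_neg]

lemma E_add (k m n1 n2 : ℕ) : E k m (n1 + n2) = E k m n1 * E k m n2 := by
  rw [E, E, E, ← Complex.exp_add]
  congr 1
  push_cast
  ring

lemma E_add_k_mul (k m n t : ℕ) (hk : k ≠ 0) : E k m (n + k * t) = E k m n := by
  rw [E_add]
  simp only [E]
  have hkC : (k : ℂ) ≠ 0 := Nat.cast_ne_zero.2 hk
  have h : 2 * (π:ℂ) * Complex.I * (k*t : ℕ) * m / k = ((t * m : ℕ) : ℤ) * (2 * π * Complex.I) := by
    push_cast
    field_simp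
  rw [h, Complex.exp_int_mul_two_pi_mul_I, mul_one]

lemma E_mod (k m : ℕ) (hk : k ≠ 0) {n1 n2 : ℕ} (h : n1 % k = n2 % k) :
    E k m n1 = E k m n2 := by
  have e1 := E_add_k_mul k m n1 (n2 / k) hk
  have e2 := E_add_k_mul k m n2 (n1 / k) hk
  have hn : n1 + k * (n2 / k) = n2 + k * (n1 / k) := by
    conv_lhs => rw [← Nat.div_add_mod n1 k]
    conv_rhs => rw [← Nat.div_add_mod n2 k]
    rw [h]; ring
  rw [← e1, hn, e2]

lemma E_pow (k m n : ℕ) : E k m n = (E k m 1) ^ n := by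
  rw [E, E, ← Complex.exp_nat_mul]
  congr 1
  push_cast
  ring

lemma E_geom (k m m' : ℕ) (hm : m < k) (hm' : m' < k) :
    ∑ j ∈ Finset.range k, E k m j * (starRingEnd ℂ) (E k m' j)
      = if m = m' then (k : ℂ) else 0 := by
  have hk : k ≠ 0 := by omega
  have hkC : (k : ℂ) ≠ 0 := Nat.cast_ne_zero.2 hk
  by_cases h : m = m'
  · subst h
    simp only [if_pos rfl]
    have : ∀ j, E k m j * (starRingEnd ℂ) (E k m j) = 1 := fun j => by
      rw [conj_E', mul_inv_cancel₀ (E_ne_zero k m j)]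
    simp [this]
  · rw [if_neg h]
    set ζ : ℂ := E k m 1 * (E k m' 1)⁻¹ with hζ
    have hterm : ∀ j, E k m j * (starRingEnd ℂ) (E k m' j) = ζ ^ j := by
      intro j
      rw [conj_E', E_pow k m j, E_pow k m' j, hζ, mul_pow, inv_pow]
    simp only [hterm]
    have hζ_eq : ζ = Complex.exp (2 * π * Complex.I * ((m : ℂ) - m') / k) := by
      rw [hζ, E, E, ← Complex.exp_neg, ← Complex.exp_add]
      congr 1
      push_cast
      field_simp
      ring
    have hζk : ζ ^ k = 1 := by
      rw [hζ_eq, ← Complex.exp_nat_mul]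
      have : (k : ℂ) * (2 * π * Complex.I * ((m : ℂ) - m') / k) = ((m : ℤ) - m') * (2 * π * Complex.I) := by
        push_cast
        field_simp
      rw [this]
      exact_mod_cast Complex.exp_int_mul_two_pi_mul_I ((m : ℤ) - m')
    have hζ1 : ζ ≠ 1 := by
      rw [hζ_eq]
      intro hc
      rw [Complex.exp_eq_one_iff] at hc
      obtain ⟨n, hn⟩ := hc
      have h2πI : (2 * (π:ℂ) * Complex.I) ≠ 0 := by
        simp [Real.pi_ne_zero, Complex.I_ne_zero]
      rw [div_eq_iff hkC] at hn
      have h1 : (2 * (π:ℂ) * Complex.I) * ((m : ℂ) - m') = (2 * (π:ℂ) * Complex.I) * ((n:ℂ) * k) := by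
        linear_combination hn
      have h2 : (m : ℂ) - m' = (n:ℂ) * k := mul_left_cancel₀ h2πI h1
      have h3 : (m : ℤ) - m' = n * k := by exact_mod_cast h2
      have hmz : (m : ℤ) < k := by exact_mod_cast hm
      have hm'z : (m' : ℤ) < k := by exact_mod_cast hm'
      have hkz : (0:ℤ) < k := by exact_mod_cast Nat.pos_of_ne_zero hk
      rcases lt_trichotomy n 0 with hn0 | hn0 | hn0
      · have : n * (k:ℤ) ≤ -1 * k := mul_le_mul_of_nonneg_right (by omega) (le_of_lt hkz)
        have hm0 : (0:ℤ) ≤ m := Int.natCast_nonneg m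
        linarith
      · exact h (by rw [hn0, zero_mul, sub_eq_zero] at h3; exact_mod_cast h3)
      · have : 1 * (k:ℤ) ≤ n * k := mul_le_mul_of_nonneg_right (by omega) (le_of_lt hkz)
        have hm0 : (0:ℤ) ≤ m' := Int.natCast_nonneg m'
        linarith
    rw [geom_sum_eq hζ1, hζk, sub_self, zero_div]

lemma parity_shift (d : ℕ) [NeZero d] (S : Finset (ZMod d)) (c a : ZMod d) (x : ZMod d → Bool) :
    parity (S.image (· + c)) (fun i => x (i - a)) = parity (S.image (· + (c - a))) x := by
  unfold parity
  rw [Finset.prod_image (fun u _ v _ h => by simpa using h),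
    Finset.prod_image (fun u _ v _ h => by simpa using h)]
  refine Finset.prod_congr rfl fun s _ => ?_
  have h : s + c - a = s + (c - a) := by ring
  simp only [h]

lemma innerSumExpand (d : ℕ) [NeZero d] (S S' : Finset (ZMod d)) (m m' : ℕ) (a a' : ZMod d) :
    ((2:ℂ)^d)⁻¹ * ∑ x : ZMod d → Bool,
        cyclicParity d S m (fun i => x (i - a)) *
          (starRingEnd ℂ) (cyclicParity d S' m' (fun i => x (i - a')))
    = (Real.sqrt (orbitSize d S) : ℂ)⁻¹ * (Real.sqrt (orbitSize d S') : ℂ)⁻¹ *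
      ∑ j ∈ Finset.range (orbitSize d S), ∑ j' ∈ Finset.range (orbitSize d S'),
        (if S.image (· + ((j : ZMod d) - a)) = S'.image (· + ((j' : ZMod d) - a')) then
          E (orbitSize d S) m j * (starRingEnd ℂ) (E (orbitSize d S') m' j') else 0) := by
  classical
  have h2 : ((2:ℂ)^d) ≠ 0 := pow_ne_zero _ two_ne_zero
  have expand1 : ∀ x : ZMod d → Bool, cyclicParity d S m (fun i => x (i - a))
      = (Real.sqrt (orbitSize d S) : ℂ)⁻¹ *
          ∑ j ∈ Finset.range (orbitSize d S), E (orbitSize d S) m j *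
            ((parity (S.image (· + ((j : ZMod d) - a))) x : ℝ) : ℂ) := by
    intro x
    rw [cyclicParity]
    congr 1
    refine Finset.sum_congr rfl fun j _ => ?_
    rw [parity_shift, E]
  have expand2 : ∀ x : ZMod d → Bool, (starRingEnd ℂ) (cyclicParity d S' m' (fun i => x (i - a')))
      = (Real.sqrt (orbitSize d S') : ℂ)⁻¹ *
          ∑ j' ∈ Finset.range (orbitSize d S'), (starRingEnd ℂ) (E (orbitSize d S') m' j') *
            ((parity (S'.image (· + ((j' : ZMod d) - a'))) x : ℝ) : ℂ) := by
    intro x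
    rw [cyclicParity, map_mul, map_sum, map_inv₀, Complex.conj_ofReal]
    congr 1
    refine Finset.sum_congr rfl fun j' _ => ?_
    rw [map_mul, Complex.conj_ofReal, parity_shift, E]
  simp_rw [expand1, expand2]
  have rearr : ∀ x : ZMod d → Bool,
      ((Real.sqrt (orbitSize d S) : ℂ)⁻¹ *
          ∑ j ∈ Finset.range (orbitSize d S), E (orbitSize d S) m j *
            ((parity (S.image (· + ((j : ZMod d) - a))) x : ℝ) : ℂ)) *
      ((Real.sqrt (orbitSize d S') : ℂ)⁻¹ *
          ∑ j' ∈ Finset.range (orbitSize d S'), (starRingEnd ℂ) (E (orbitSize d S') m' j') *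
            ((parity (S'.image (· + ((j' : ZMod d) - a'))) x : ℝ) : ℂ))
      = (Real.sqrt (orbitSize d S) : ℂ)⁻¹ * (Real.sqrt (orbitSize d S') : ℂ)⁻¹ *
        ∑ j ∈ Finset.range (orbitSize d S), ∑ j' ∈ Finset.range (orbitSize d S'),
          (E (orbitSize d S) m j * (starRingEnd ℂ) (E (orbitSize d S') m' j')) *
            ((parity (S.image (· + ((j : ZMod d) - a))) x *
              parity (S'.image (· + ((j' : ZMod d) - a'))) x : ℝ) : ℂ) := by
    intro x
    rw [mul_mul_mul_comm]
    congr 1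
    rw [Finset.sum_mul_sum]
    refine Finset.sum_congr rfl fun j _ => ?_
    refine Finset.sum_congr rfl fun j' _ => ?_
    push_cast
    ring
  simp_rw [rearr]
  rw [← Finset.mul_sum, ← mul_assoc, mul_comm (((2:ℂ)^d)⁻¹), mul_assoc]
  congr 1
  rw [Finset.sum_comm, Finset.mul_sum]
  refine Finset.sum_congr rfl fun j _ => ?_
  rw [Finset.sum_comm, Finset.mul_sum]
  refine Finset.sum_congr rfl fun j' _ => ?_
  rw [← Finset.mul_sum, ← Complex.ofReal_sum, sum_parity_mul, ZMod.card]
  by_cases hc : S.image (· + ((j:ZMod d) - a)) = S'.image (· + ((j':ZMod d) - a'))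
  · rw [if_pos hc, if_pos hc]
    push_cast
    field_simp
  · rw [if_neg hc, if_neg hc]
    simp

lemma image_eq_image_iff (d : ℕ) [NeZero d] (S : Finset (ZMod d)) (c c' : ZMod d) :
    S.image (· + c) = S.image (· + c') ↔ S.image (· + (c - c')) = S := by
  constructor
  · intro h
    have h2 := congrArg (Finset.image (· + (-c'))) h
    rw [image_add_add, image_add_add, add_neg_cancel] at h2
    simpa [sub_eq_add_neg] using h2
  · intro h
    have h2 := congrArg (Finset.image (· + c')) h
    rw [image_add_add, sub_add_cancel] at h2
    exact h2

lemma double_sum (d : ℕ) [NeZero d] (S : Finset (ZMod d)) (m m' : ℕ)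
    (hm : m < period d S) (hm' : m' < period d S) (a a' : ZMod d) :
    ∑ j ∈ Finset.range (period d S), ∑ j' ∈ Finset.range (period d S),
      (if S.image (· + ((j : ZMod d) - a)) = S.image (· + ((j' : ZMod d) - a')) then
        E (period d S) m j * (starRingEnd ℂ) (E (period d S) m' j') else 0)
    = if m = m' then (period d S : ℂ) *
        E (period d S) m' (((ZMod.val a : ZMod (period d S)) - (ZMod.val a' : ZMod (period d S))).val)
      else 0 := by
  classical
  set p := period d S with hp
  haveI : NeZero p := ⟨(period_pos d S).ne'⟩
  have hp0 : p ≠ 0 := (period_pos d S).ne'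
  set c : ZMod p := (ZMod.val a : ZMod p) - (ZMod.val a' : ZMod p) with hc
  have key : ∀ u : ZMod d, ((u.val : ℕ) : ZMod p) = ZMod.castHom (period_dvd d S) (ZMod p) u := by
    intro u; rw [ZMod.natCast_val, ZMod.castHom_apply]
  have hcond : ∀ j j' : ℕ,
      (S.image (· + ((j : ZMod d) - a)) = S.image (· + ((j' : ZMod d) - a')))
        ↔ ((j' : ZMod p) = (j : ZMod p) - c) := by
    intro j j'
    rw [image_eq_image_iff, stab_zmod, ← ZMod.natCast_eq_zero_iff _ p, key,
      map_sub, map_sub, map_sub, map_natCast, map_natCast, ← key a, ← key a', sub_eq_zero, hc]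
    constructor
    · intro h; linear_combination -h
    · intro h; linear_combination -h
  simp only [hcond]
  have step : ∀ j : ℕ,
      (∑ j' ∈ Finset.range p, if (j' : ZMod p) = (j : ZMod p) - c then
          E p m j * (starRingEnd ℂ) (E p m' j') else 0)
        = E p m j * (starRingEnd ℂ) (E p m' (((j : ZMod p) - c).val)) := by
    intro j
    have hiff : ∀ j' ∈ Finset.range p,
        (if (j' : ZMod p) = (j : ZMod p) - c then E p m j * (starRingEnd ℂ) (E p m' j') else 0)
          = (if j' = ((j : ZMod p) - c).val then E p m j * (starRingEnd ℂ) (E p m' j') else 0) := by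
      intro j' hj'
      rw [Finset.mem_range] at hj'
      refine if_congr ?_ rfl rfl
      constructor
      · intro h; rw [← h, ZMod.val_cast_of_lt hj']
      · intro h; rw [h]; simp [ZMod.natCast_val, ZMod.cast_id]
    rw [Finset.sum_congr rfl hiff, Finset.sum_ite_eq' (Finset.range p) _
      (fun j' => E p m j * (starRingEnd ℂ) (E p m' j')),
      if_pos (Finset.mem_range.2 (ZMod.val_lt _))]
  simp only [step]
  have conjrel : ∀ j : ℕ, (starRingEnd ℂ) (E p m' (((j : ZMod p) - c).val))
      = (starRingEnd ℂ) (E p m' j) * E p m' (c.val) := by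
    intro j
    have hmodeq : ((((j : ZMod p) - c).val + c.val : ℕ) : ZMod p) = ((j : ℕ) : ZMod p) := by
      push_cast [ZMod.natCast_val, ZMod.cast_id]
      ring
    have hmod : (((j : ZMod p) - c).val + c.val) % p = j % p :=
      (ZMod.natCast_eq_natCast_iff _ _ _).1 hmodeq
    have hE : E p m' (((j : ZMod p) - c).val) * E p m' (c.val) = E p m' j := by
      rw [← E_add]; exact E_mod p m' hp0 hmod
    have h1 : E p m' (((j : ZMod p) - c).val) = E p m' j * (E p m' (c.val))⁻¹ := by
      field_simp [E_ne_zero] at hE ⊢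
      linear_combination hE
    rw [h1, map_mul, map_inv₀, conj_E' p m' (ZMod.val c), inv_inv]
  simp only [conjrel]
  have : ∀ j ∈ Finset.range p, E p m j * ((starRingEnd ℂ) (E p m' j) * E p m' (c.val))
      = (E p m j * (starRingEnd ℂ) (E p m' j)) * E p m' (c.val) := fun j _ => by ring
  rw [Finset.sum_congr rfl this, ← Finset.sum_mul, E_geom p m m' hm hm', ite_mul, zero_mul]

lemma E_scale (d k m n : ℕ) (hkd : k ∣ d) (hd : d ≠ 0) :
    E d (m * (d / k)) n = E k m n := by
  have hk : k ≠ 0 := fun h => hd (by subst h; simpa using hkd)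
  rw [E, E]
  congr 1
  have hdk : ((d / k : ℕ) : ℂ) = (d : ℂ) / k := Nat.cast_div hkd (Nat.cast_ne_zero.2 hk)
  push_cast [hdk]
  have hkC : (k : ℂ) ≠ 0 := Nat.cast_ne_zero.2 hk
  have hdC : (d : ℂ) ≠ 0 := Nat.cast_ne_zero.2 hd
  field_simp

lemma dft_eq (d : ℕ) [NeZero d] (p : ZMod d → ℝ) (k m : ℕ) (hkd : k ∣ d) (hmk : m < k) :
    dft d p ((m * (d / k) : ℕ) : ZMod d)
      = ∑ a : ZMod d, (p a : ℂ) * (starRingEnd ℂ) (E k m (ZMod.val a)) := by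
  have hd : d ≠ 0 := NeZero.ne d
  have hk : k ≠ 0 := fun h => hd (by subst h; simpa using hkd)
  have hdk_pos : 0 < d / k := Nat.div_pos (Nat.le_of_dvd (Nat.pos_of_ne_zero hd) hkd) (Nat.pos_of_ne_zero hk)
  have hlt : m * (d / k) < d := by
    calc m * (d / k) < k * (d / k) := by
          exact Nat.mul_lt_mul_of_lt_of_le hmk le_rfl hdk_pos
      _ = d := Nat.mul_div_cancel' hkd
  have hωval : (((m * (d / k) : ℕ) : ZMod d)).val = m * (d / k) := ZMod.val_cast_of_lt hlt
  rw [dft]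
  refine Finset.sum_congr rfl fun a _ => ?_
  rw [hωval, conj_E]
  congr 2
  have hdk : ((d / k : ℕ) : ℂ) = (d : ℂ) / k := Nat.cast_div hkd (Nat.cast_ne_zero.2 hk)
  have hkC : (k : ℂ) ≠ 0 := Nat.cast_ne_zero.2 hk
  have hdC : (d : ℂ) ≠ 0 := Nat.cast_ne_zero.2 hd
  push_cast [hdk]
  field_simp

/-- **Random translations are diagonal in the cyclic-parity basis.**
For `X` uniform on `{−1,+1}^{ℤ/dℤ}` and two augmentations `a·X`, `a'·X` with
`a, a'` i.i.d. from a distribution `p` on `ℤ/dℤ` independent of `X`, for orbit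
representatives `S, S' ∈ 𝒮` and `m < k_S`, `m' < k_{S'}`:
`E[ψ_{m,S}(a·X) conj(ψ_{m',S'}(a'·X))] = |p̂(m·d/k_S)|²` if `(m,S) = (m',S')` and `0`
otherwise. -/
theorem translation_operator_diagonal_in_cyclic_parity_basis
    (d : ℕ) [NeZero d] (hd : 1 ≤ d)
    (𝒮 : Finset (Finset (ZMod d)))
    (hrep : ∀ T : Finset (ZMod d),
      ∃! S, S ∈ 𝒮 ∧ ∃ a : ZMod d, T = S.image (· + a))
    (p : ZMod d → ℝ) (hp0 : ∀ a, 0 ≤ p a) (hp1 : ∑ a : ZMod d, p a = 1) :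
    ∀ S ∈ 𝒮, ∀ S' ∈ 𝒮, ∀ m < orbitSize d S, ∀ m' < orbitSize d S',
      ((2 : ℂ) ^ d)⁻¹ *
          ∑ x : ZMod d → Bool, ∑ a : ZMod d, ∑ a' : ZMod d,
            ((p a : ℂ) * (p a' : ℂ)) *
              (cyclicParity d S m (fun i => x (i - a)) *
                (starRingEnd ℂ) (cyclicParity d S' m' (fun i => x (i - a'))))
        = if S = S' ∧ m = m'
            then ((‖dft d p ((m * (d / orbitSize d S) : ℕ) : ZMod d)‖) ^ 2 : ℂ)
            else 0 := by
  intro S hS S' hS' m hm m' hm'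
  classical
  have expand : ((2:ℂ)^d)⁻¹ * (∑ x : ZMod d → Bool, ∑ a : ZMod d, ∑ a' : ZMod d,
        ((p a : ℂ) * (p a' : ℂ)) * (cyclicParity d S m (fun i => x (i - a)) *
          (starRingEnd ℂ) (cyclicParity d S' m' (fun i => x (i - a')))))
      = ∑ a : ZMod d, ∑ a' : ZMod d, ((p a : ℂ) * (p a' : ℂ)) *
          ((Real.sqrt (orbitSize d S) : ℂ)⁻¹ * (Real.sqrt (orbitSize d S') : ℂ)⁻¹ *
            ∑ j ∈ Finset.range (orbitSize d S), ∑ j' ∈ Finset.range (orbitSize d S'),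
              (if S.image (· + ((j : ZMod d) - a)) = S'.image (· + ((j' : ZMod d) - a')) then
                E (orbitSize d S) m j * (starRingEnd ℂ) (E (orbitSize d S') m' j') else 0)) := by
    conv_lhs => rw [Finset.sum_comm]
    conv_lhs => rw [Finset.mul_sum]
    refine Finset.sum_congr rfl fun a _ => ?_
    conv_lhs => rw [Finset.sum_comm]
    conv_lhs => rw [Finset.mul_sum]
    refine Finset.sum_congr rfl fun a' _ => ?_
    rw [← innerSumExpand d S S' m m' a a', ← Finset.mul_sum]
    ring
  rw [expand]
  by_cases hSS : S = S'
  · subst hSS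
    simp only [orbitSize_eq d S] at hm hm' ⊢
    simp only [double_sum d S m m' hm hm']
    by_cases hmm' : m = m'
    · subst hmm'
      simp only [eq_self_iff_true, and_self, if_true]
      set P := period d S with hP
      haveI : NeZero P := ⟨(period_pos d S).ne'⟩
      have hPd : P ∣ d := period_dvd d S
      have hP0 : (P : ℂ) ≠ 0 := Nat.cast_ne_zero.2 (period_pos d S).ne'
      have hsq : ((Real.sqrt P : ℝ) : ℂ)⁻¹ * ((Real.sqrt P : ℝ) : ℂ)⁻¹ * (P : ℂ) = 1 := by
        have h1 : ((Real.sqrt P : ℝ) : ℂ) * ((Real.sqrt P : ℝ) : ℂ) = (P : ℂ) := by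
          rw [← Complex.ofReal_mul, Real.mul_self_sqrt (Nat.cast_nonneg P)]
          push_cast
          ring
        rw [← mul_inv, h1, inv_mul_cancel₀ hP0]
      have hEdiff : ∀ a a' : ZMod d,
          E P m (((ZMod.val a : ZMod P) - (ZMod.val a' : ZMod P)).val)
            = E P m (ZMod.val a) * (starRingEnd ℂ) (E P m (ZMod.val a')) := by
        intro a a'
        set u : ZMod P := (ZMod.val a : ZMod P) with hu
        set v : ZMod P := (ZMod.val a' : ZMod P) with hv
        have e : ∀ w : ZMod P, ((ZMod.val w : ℕ) : ZMod P) = w := fun w => by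
          rw [ZMod.natCast_val, ZMod.cast_id]
        have hmodeq : (((u - v).val + v.val : ℕ) : ZMod P) = ((ZMod.val a : ℕ) : ZMod P) := by
          push_cast
          rw [e (u - v), e v]
          show u - v + v = u
          ring
        have h1 : E P m ((u - v).val) * E P m (v.val) = E P m (ZMod.val a) := by
          rw [← E_add]
          exact E_mod P m (period_pos d S).ne' ((ZMod.natCast_eq_natCast_iff _ _ _).1 hmodeq)
        have h2 : E P m (v.val) = E P m (ZMod.val a') := by
          refine E_mod P m (period_pos d S).ne' ?_
          rw [hv, ZMod.val_natCast, Nat.mod_mod_of_dvd _ dvd_rfl]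
        rw [h2] at h1
        have h3 : E P m ((u - v).val) = E P m (ZMod.val a) * (E P m (ZMod.val a'))⁻¹ := by
          field_simp [E_ne_zero] at h1 ⊢
          linear_combination h1
        rw [h3, conj_E' P m (ZMod.val a')]
      have hD := dft_eq d p P m hPd hm
      calc ∑ a : ZMod d, ∑ a' : ZMod d, ((p a : ℂ) * (p a' : ℂ)) *
              ((Real.sqrt P : ℂ)⁻¹ * (Real.sqrt P : ℂ)⁻¹ *
                ((P : ℂ) * E P m (((ZMod.val a : ZMod P) - (ZMod.val a' : ZMod P)).val)))
          = ∑ a : ZMod d, ∑ a' : ZMod d,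
              ((p a : ℂ) * E P m (ZMod.val a)) * ((p a' : ℂ) * (starRingEnd ℂ) (E P m (ZMod.val a'))) := by
            refine Finset.sum_congr rfl fun a _ => Finset.sum_congr rfl fun a' _ => ?_
            rw [hEdiff a a']
            linear_combination (↑(p a) * ↑(p a') * (E P m (ZMod.val a) * (starRingEnd ℂ) (E P m (ZMod.val a')))) * hsq
        _ = (∑ a : ZMod d, (p a : ℂ) * E P m (ZMod.val a)) *
              (∑ a' : ZMod d, (p a' : ℂ) * (starRingEnd ℂ) (E P m (ZMod.val a'))) := by
            rw [Finset.sum_mul_sum]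
        _ = (starRingEnd ℂ) (dft d p ((m * (d / P) : ℕ) : ZMod d)) * dft d p ((m * (d / P) : ℕ) : ZMod d) := by
            rw [hD]
            congr 1
            rw [map_sum]
            refine Finset.sum_congr rfl fun a _ => ?_
            rw [map_mul, Complex.conj_conj, Complex.conj_ofReal]
        _ = (‖dft d p ((m * (d / P) : ℕ) : ZMod d)‖ : ℂ) ^ 2 := by
            rw [mul_comm, Complex.mul_conj, ← Complex.sq_norm, Complex.ofReal_pow]
    · simp [hmm']
  · have hne : ∀ (c c' : ZMod d), S.image (· + c) ≠ S'.image (· + c') := by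
      intro c c' h
      obtain ⟨U, -, hU⟩ := hrep (S'.image (· + c'))
      exact hSS ((hU S ⟨hS, c, h.symm⟩).trans (hU S' ⟨hS', c', rfl⟩).symm)
    have hzero : ∀ (a a' : ZMod d) (j j' : ℕ),
        (if S.image (· + ((j : ZMod d) - a)) = S'.image (· + ((j' : ZMod d) - a')) then
          E (orbitSize d S) m j * (starRingEnd ℂ) (E (orbitSize d S') m' j') else 0) = 0 :=
      fun a a' j j' => if_neg (hne _ _)
    simp only [hzero, Finset.sum_const_zero, mul_zero]
    first
    | rfl
    | (rw [if_neg (fun h : S = S' ∧ m = m' => hSS h.1)])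
    | simp [hSS]
end Period
end

section
/- Let H be a separable real Hilbert space and T : H → H a bounded self-adjoint operator. Suppose there are an integer k_λ ≥ 1, reals λ_1 ≥ λ_2 ≥ … ≥ λ_{k_λ} > 0, and an orthonormal family (f_i)_{i=1}^{k_λ} of eigenvectors with T f_i = λ_i f_i, such that T is dominated by its positive part along this family: ⟨g, T g⟩ ≤ ∑_{i=1}^{k_λ} λ_i ⟨f_i, g⟩² for all g ∈ H. Let 1 ≤ k ≤ k_λ, let (g_j)_{j=1}^{k} be any orthonormal family in H with nonnegative coefficients μ_1,…,μ_k ≥ 0, and let Π be the orthogonal projection onto span(g_1,…,g_k). Then ∑_{i=1}^{k} λ_i² ‖f_i − Π f_i‖² − ∑_{i=k+1}^{k_λ} λ_i² ‖Π f_i‖² ≤ ∑_{j=1}^{k} μ_j² − 2 ∑_{j=1}^{k} μ_j ⟨g_j, T g_j⟩ + ∑_{i=1}^{k} λ_i². (This is the transfer bound: the right-hand side is the excess pretraining loss of the rank-k representation C = ∑_j μ_j g_j ⊗ g_j over the optimal one, and the left-hand side controls the misalignment of the learned subspace with the top-k eigenspace of T.) -/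
open scoped RealInnerProductSpace

/-- **The transfer bound.**
Let `T` be a bounded self-adjoint operator on a separable real Hilbert space with an
orthonormal family `(f_i)_{i≤k_λ}` of eigenvectors for positive decreasing eigenvalues
`λ_1 ≥ ⋯ ≥ λ_{k_λ} > 0`, dominating `T`: `⟪g, Tg⟫ ≤ ∑_i λ_i ⟪f_i, g⟫²` for all `g`.
For any `1 ≤ k ≤ k_λ`, any orthonormal `(g_j)_{j≤k}` with coefficients `μ_j ≥ 0`, and `Π`
the orthogonal projection onto `span(g_1,…,g_k)` (so `Π h = ∑_j ⟪g_j, h⟫ • g_j`),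
`∑_{i≤k} λ_i² ‖f_i − Π f_i‖² − ∑_{k<i≤k_λ} λ_i² ‖Π f_i‖²
  ≤ ∑_j μ_j² − 2 ∑_j μ_j ⟪g_j, T g_j⟫ + ∑_{i≤k} λ_i²`. -/
theorem transfer_bound
    {H : Type*} [NormedAddCommGroup H] [InnerProductSpace ℝ H] [CompleteSpace H]
    [TopologicalSpace.SeparableSpace H]
    (T : H →L[ℝ] H) (hT : IsSelfAdjoint T)
    (kl : ℕ) (hkl : 1 ≤ kl)
    (lam : Fin kl → ℝ) (hpos : ∀ i, 0 < lam i)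
    (hdec : ∀ i j : Fin kl, i ≤ j → lam j ≤ lam i)
    (f : Fin kl → H) (hf : Orthonormal ℝ f)
    (heig : ∀ i, T (f i) = lam i • f i)
    (hdom : ∀ g : H, ⟪g, T g⟫ ≤ ∑ i : Fin kl, lam i * ⟪f i, g⟫ ^ 2)
    (k : ℕ) (hk1 : 1 ≤ k) (hkkl : k ≤ kl)
    (g : Fin k → H) (hg : Orthonormal ℝ g)
    (μ : Fin k → ℝ) (hμ : ∀ j, 0 ≤ μ j) :
    (∑ i ∈ Finset.univ.filter (fun i : Fin kl => (i : ℕ) < k),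
        lam i ^ 2 * ‖f i - ∑ j : Fin k, ⟪g j, f i⟫ • g j‖ ^ 2)
      - (∑ i ∈ Finset.univ.filter (fun i : Fin kl => k ≤ (i : ℕ)),
          lam i ^ 2 * ‖∑ j : Fin k, ⟪g j, f i⟫ • g j‖ ^ 2)
    ≤ (∑ j : Fin k, μ j ^ 2) - 2 * ∑ j : Fin k, μ j * ⟪g j, T (g j)⟫
        + ∑ i ∈ Finset.univ.filter (fun i : Fin kl => (i : ℕ) < k), lam i ^ 2 := by
  classical
  -- abbreviations
  set A : Fin kl → Fin k → ℝ := fun i j => ⟪g j, f i⟫ with hA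
  set s : Fin kl → ℝ := fun i => ∑ j, A i j ^ 2 with hsdef
  -- norm of projection
  have hnormP : ∀ i, ‖∑ j : Fin k, ⟪g j, f i⟫ • g j‖ ^ 2 = s i := by
    intro i
    have h := hg.inner_sum (fun j => A i j) (fun j => A i j) Finset.univ
    rw [← real_inner_self_eq_norm_sq]
    simpa [hsdef, pow_two] using h
  -- inner product of f i with projection
  have hinnerP : ∀ i, ⟪f i, ∑ j : Fin k, ⟪g j, f i⟫ • g j⟫ = s i := by
    intro i
    rw [inner_sum]
    simp only [real_inner_smul_right]
    refine Finset.sum_congr rfl fun j _ => ?_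
    simp only [hA]
    rw [real_inner_comm (f i) (g j), sq]
  -- norm of residual
  have hnormR : ∀ i, ‖f i - ∑ j : Fin k, ⟪g j, f i⟫ • g j‖ ^ 2 = 1 - s i := by
    intro i
    rw [norm_sub_sq_real, hnormP, hinnerP, hf.1 i]
    ring
  -- Bessel for g j against the f family
  have hbessel : ∀ j, ∑ i : Fin kl, A i j ^ 2 ≤ 1 := by
    intro j
    have h := hf.sum_inner_products_le (g j) (s := Finset.univ)
    rw [hg.1 j] at h
    simpa [hA, real_inner_comm, Real.norm_eq_abs, sq_abs, real_inner_comm (f _) (g j)] using h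
  -- domination rewritten
  have hdom' : ∀ j, ⟪g j, T (g j)⟫ ≤ ∑ i : Fin kl, lam i * A i j ^ 2 := by
    intro j
    have h := hdom (g j)
    convert h using 2 with i
    rw [hA]
    rw [real_inner_comm]
  -- the key quadratic inequality
  have key : 2 * ∑ j : Fin k, μ j * ∑ i : Fin kl, lam i * A i j ^ 2
      ≤ (∑ j : Fin k, μ j ^ 2) + ∑ i : Fin kl, lam i ^ 2 * s i := by
    have h1 : 0 ≤ ∑ j : Fin k, ∑ i : Fin kl, (μ j - lam i) ^ 2 * A i j ^ 2 := by
      positivity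
    have h2 : ∑ j : Fin k, ∑ i : Fin kl, (μ j - lam i) ^ 2 * A i j ^ 2
        = (∑ j : Fin k, μ j ^ 2 * ∑ i : Fin kl, A i j ^ 2)
          - 2 * (∑ j : Fin k, μ j * ∑ i : Fin kl, lam i * A i j ^ 2)
          + ∑ j : Fin k, ∑ i : Fin kl, lam i ^ 2 * A i j ^ 2 := by
      rw [Finset.mul_sum, ← Finset.sum_sub_distrib, ← Finset.sum_add_distrib]
      refine Finset.sum_congr rfl fun j _ => ?_
      simp only [Finset.mul_sum, ← Finset.sum_sub_distrib, ← Finset.sum_add_distrib]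
      exact Finset.sum_congr rfl fun i _ => by ring
    have h3 : ∑ j : Fin k, μ j ^ 2 * ∑ i : Fin kl, A i j ^ 2 ≤ ∑ j : Fin k, μ j ^ 2 := by
      refine Finset.sum_le_sum fun j _ => ?_
      have := hbessel j
      nlinarith [sq_nonneg (μ j)]
    have h4 : ∑ j : Fin k, ∑ i : Fin kl, lam i ^ 2 * A i j ^ 2
        = ∑ i : Fin kl, lam i ^ 2 * s i := by
      rw [Finset.sum_comm]
      refine Finset.sum_congr rfl fun i _ => ?_
      rw [hsdef, Finset.mul_sum]
    linarith
  -- rewrite LHS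
  have hsplit : (Finset.univ.filter (fun i : Fin kl => (i : ℕ) < k))
      ∪ (Finset.univ.filter (fun i : Fin kl => k ≤ (i : ℕ))) = Finset.univ := by
    have h := Finset.filter_union_filter_not_eq (fun i : Fin kl => (i : ℕ) < k) Finset.univ
    simpa [not_lt] using h
  have hdisj : Disjoint (Finset.univ.filter (fun i : Fin kl => (i : ℕ) < k))
      (Finset.univ.filter (fun i : Fin kl => k ≤ (i : ℕ))) := by
    have h := Finset.disjoint_filter_filter_not (Finset.univ) (Finset.univ)
      (fun i : Fin kl => (i : ℕ) < k)
    simpa [not_lt] using h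
  have hLHS : (∑ i ∈ Finset.univ.filter (fun i : Fin kl => (i : ℕ) < k),
        lam i ^ 2 * ‖f i - ∑ j : Fin k, ⟪g j, f i⟫ • g j‖ ^ 2)
      - (∑ i ∈ Finset.univ.filter (fun i : Fin kl => k ≤ (i : ℕ)),
          lam i ^ 2 * ‖∑ j : Fin k, ⟪g j, f i⟫ • g j‖ ^ 2)
      = (∑ i ∈ Finset.univ.filter (fun i : Fin kl => (i : ℕ) < k), lam i ^ 2)
        - ∑ i : Fin kl, lam i ^ 2 * s i := by
    have e1 : ∀ i, lam i ^ 2 * ‖f i - ∑ j : Fin k, ⟪g j, f i⟫ • g j‖ ^ 2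
        = lam i ^ 2 - lam i ^ 2 * s i := by
      intro i; rw [hnormR]; ring
    have e2 : ∀ i, lam i ^ 2 * ‖∑ j : Fin k, ⟪g j, f i⟫ • g j‖ ^ 2
        = lam i ^ 2 * s i := by
      intro i; rw [hnormP]
    simp only [e1, e2, Finset.sum_sub_distrib]
    have : ∑ i : Fin kl, lam i ^ 2 * s i
        = (∑ i ∈ Finset.univ.filter (fun i : Fin kl => (i : ℕ) < k), lam i ^ 2 * s i)
          + ∑ i ∈ Finset.univ.filter (fun i : Fin kl => k ≤ (i : ℕ)), lam i ^ 2 * s i := by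
      rw [← Finset.sum_union hdisj, hsplit]
    linarith
  rw [hLHS]
  have hsum_dom : ∑ j : Fin k, μ j * ⟪g j, T (g j)⟫
      ≤ ∑ j : Fin k, μ j * ∑ i : Fin kl, lam i * A i j ^ 2 :=
    Finset.sum_le_sum fun j _ => mul_le_mul_of_nonneg_left (hdom' j) (hμ j)
  linarith
end
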